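/- arXiv:1807.04810 — 2 statements merged into one kernel-verified Lean document; each statement's English description precedes it below -/
import Mathlib

section
/- For every integer n ≥ 1, the graph Λ_n is a connected 3-regular simple graph on 16n⁴ vertices. -/
abbrev RSet := ZMod 2 × ZMod 2 × ZMod 2 × ZMod 2

def rmul (p q : RSet) : RSet :=
  (p.1 + q.1, p.2.1 + q.2.1, p.2.2.1 + q.2.2.1,
   p.2.2.2 + q.2.2.2 + p.2.1 * q.1 + p.2.2.1 * q.2.1 + p.2.2.1 * q.1)

def aR : RSet := (1, 0, 0, 0)
def bR : RSet := (0, 1, 0, 0)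
def cR : RSet := (0, 0, 1, 0)
def idR : RSet := (0, 0, 0, 0)
def zR : RSet := (0, 0, 0, 1)
def bcR : RSet := (0, 1, 1, 0)
def bzR : RSet := (0, 1, 0, 1)
def czR : RSet := (0, 0, 1, 1)
def bczR : RSet := (0, 1, 1, 1)

lemma rmul_aa : ∀ g : RSet, rmul aR (rmul aR g) = g := by decide
lemma rmul_bb : ∀ g : RSet, rmul bR (rmul bR g) = g := by decide
lemma rmul_cc : ∀ g : RSet, rmul cR (rmul cR g) = g := by decide

def MK : SimpleGraph RSet where
  Adj g h := g ≠ h ∧ (h = rmul aR g ∨ h = rmul bR g ∨ h = rmul cR g)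
  symm := ⟨by
    rintro g h ⟨hne, h1 | h1 | h1⟩
    · exact ⟨hne.symm, Or.inl (by rw [h1, rmul_aa])⟩
    · exact ⟨hne.symm, Or.inr (Or.inl (by rw [h1, rmul_bb]))⟩
    · exact ⟨hne.symm, Or.inr (Or.inr (by rw [h1, rmul_cc]))⟩⟩
  loopless := ⟨fun g hg => hg.1 rfl⟩

/-- Integer quadruples, recording voltages before reduction mod `n`. -/
abbrev ZQuad := ℤ × ℤ × ℤ × ℤ

/-- The voltage assignment `ζ` on the arcs of the Möbius–Kantor graph (with values
written in `ℤ⁴`; `e₁,…,e₄` are the standard basis vectors). -/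
def zetaZ (u v : RSet) : ZQuad :=
  if u = idR ∧ v = cR then (1, 0, 0, 0)
  else if u = cR ∧ v = bcR then (0, 1, 0, 0)
  else if u = bcR ∧ v = bzR then (0, 0, 1, 0)
  else if u = bzR ∧ v = zR then (0, 0, 0, 1)
  else if u = zR ∧ v = czR then (-1, 0, 0, 0)
  else if u = czR ∧ v = bczR then (0, -1, 0, 0)
  else if u = bczR ∧ v = bR then (0, 0, -1, 0)
  else if u = bR ∧ v = idR then (0, 0, 0, -1)
  else if u = cR ∧ v = idR then (-1, 0, 0, 0)
  else if u = bcR ∧ v = cR then (0, -1, 0, 0)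
  else if u = bzR ∧ v = bcR then (0, 0, -1, 0)
  else if u = zR ∧ v = bzR then (0, 0, 0, -1)
  else if u = czR ∧ v = zR then (1, 0, 0, 0)
  else if u = bczR ∧ v = czR then (0, 1, 0, 0)
  else if u = bR ∧ v = bczR then (0, 0, 1, 0)
  else if u = idR ∧ v = bR then (0, 0, 0, 1)
  else 0

lemma zetaZ_anti : ∀ u v : RSet, zetaZ v u = -zetaZ u v := by decide

/-- Quadruples over `ℤ/nℤ`. -/
abbrev NQuad (n : ℕ) := ZMod n × ZMod n × ZMod n × ZMod n

/-- Reduction of an integer quadruple modulo `n`. -/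
def castQuad (n : ℕ) (p : ZQuad) : NQuad n :=
  ((p.1 : ZMod n), (p.2.1 : ZMod n), (p.2.2.1 : ZMod n), (p.2.2.2 : ZMod n))

lemma castQuad_neg (n : ℕ) (p : ZQuad) : castQuad n (-p) = -castQuad n p := by
  simp [castQuad, Prod.ext_iff]

/-- The covering graph `Λ_n` of the Möbius–Kantor graph derived from the voltage
assignment `ζ` with values in `(ℤ/nℤ)⁴`. -/
def Lam (n : ℕ) : SimpleGraph (RSet × NQuad n) where
  Adj p q := MK.Adj p.1 q.1 ∧ q.2 = p.2 + castQuad n (zetaZ p.1 q.1)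
  symm := ⟨by
    rintro ⟨u, x⟩ ⟨v, y⟩ ⟨hadj, hy⟩
    refine ⟨hadj.symm, ?_⟩
    rw [zetaZ_anti u v, castQuad_neg, hy]
    abel⟩
  loopless := ⟨fun p hp => MK.loopless.irrefl p.1 hp.1⟩

/-!
The arcs of voltage zero already form a connected spanning subgraph of `MK`, so any two vertices
of `Λ_n` with the same fibre coordinate are joined by a path. Combining such paths with a single
arc `id → c`, `c → bc`, `bc → bz` or `bz → z` joins `(u, x)` to `(u, x + eᵢ)`; these shifts
generate `(ℤ/nℤ)⁴`, so `Λ_n` is connected. It is cubic because `a u`, `b u` and `c u` are three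
distinct neighbours of `u` in `MK`.
-/

namespace SimpleGraph

variable {V : Type*} [DecidableEq V] [Fintype V]

def reachFinset (G : SimpleGraph V) [DecidableRel G.Adj] (r : V) : ℕ → Finset V
  | 0 => {r}
  | k + 1 => let s := G.reachFinset r k; s ∪ s.biUnion fun v => G.neighborFinset v

theorem reachable_of_mem_reachFinset (G : SimpleGraph V) [DecidableRel G.Adj] {r v : V} :
    ∀ {k : ℕ}, v ∈ G.reachFinset r k → G.Reachable r v
  | 0, hv => by rw [Finset.mem_singleton.mp hv]
  | k + 1, hv => by
    rcases Finset.mem_union.mp hv with hv | hv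
    · exact reachable_of_mem_reachFinset G hv
    · obtain ⟨w, hw, hwv⟩ := Finset.mem_biUnion.mp hv
      exact (reachable_of_mem_reachFinset G hw).trans ((G.mem_neighborFinset w v).mp hwv).reachable

theorem connected_of_forall_mem_reachFinset (G : SimpleGraph V) [DecidableRel G.Adj] {r : V}
    {k : ℕ} (h : ∀ v, v ∈ G.reachFinset r k) : G.Connected :=
  (connected_iff_exists_forall_reachable G).mpr
    ⟨r, fun v => G.reachable_of_mem_reachFinset (h v)⟩

end SimpleGraph

instance : DecidableRel MK.Adj := fun g h =>
  inferInstanceAs (Decidable (g ≠ h ∧ (h = rmul aR g ∨ h = rmul bR g ∨ h = rmul cR g)))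

lemma rmul_right_cancel : ∀ s t u : RSet, rmul s u = rmul t u → s = t := by decide

lemma rmul_ne_self : ∀ s u : RSet, s ≠ idR → rmul s u ≠ u := by decide

lemma MK.adj_iff {u v : RSet} :
    MK.Adj u v ↔ v = rmul aR u ∨ v = rmul bR u ∨ v = rmul cR u := by
  refine ⟨And.right, fun h => ⟨?_, h⟩⟩
  rcases h with rfl | rfl | rfl <;> exact (rmul_ne_self _ u (by decide)).symm

lemma castQuad_zero (n : ℕ) : castQuad n 0 = 0 := by
  simp [castQuad]

lemma castQuad_eq_zsmul_basis (n : ℕ) (p : ZQuad) :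
    castQuad n p = p.1 • castQuad n (1, 0, 0, 0) + p.2.1 • castQuad n (0, 1, 0, 0) +
      p.2.2.1 • castQuad n (0, 0, 1, 0) + p.2.2.2 • castQuad n (0, 0, 0, 1) := by
  simp [castQuad]

lemma castQuad_surjective (n : ℕ) : Function.Surjective (castQuad n) := fun y =>
  ⟨(y.1.cast, y.2.1.cast, y.2.2.1.cast, y.2.2.2.cast), by simp [castQuad]⟩

lemma Lam.neighborSet_eq (n : ℕ) (u : RSet) (x : NQuad n) :
    (Lam n).neighborSet (u, x) =
      {(rmul aR u, x + castQuad n (zetaZ u (rmul aR u))),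
       (rmul bR u, x + castQuad n (zetaZ u (rmul bR u))),
       (rmul cR u, x + castQuad n (zetaZ u (rmul cR u)))} := by
  ext ⟨v, y⟩
  simp only [SimpleGraph.mem_neighborSet, Lam, MK.adj_iff, Set.mem_insert_iff,
    Set.mem_singleton_iff, Prod.mk.injEq]
  constructor
  · rintro ⟨h | h | h, rfl⟩ <;> subst h <;> simp
  · rintro (⟨rfl, rfl⟩ | ⟨rfl, rfl⟩ | ⟨rfl, rfl⟩) <;> simp

lemma Lam.card_neighborSet (n : ℕ) (p : RSet × NQuad n) :
    Nat.card ((Lam n).neighborSet p) = 3 := by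
  have hne : ∀ {s t : RSet} {x y : NQuad n}, s ≠ t → ∀ u, (rmul s u, x) ≠ (rmul t u, y) :=
    fun hst u h => hst (rmul_right_cancel _ _ u (congrArg Prod.fst h))
  rw [Nat.card_coe_set_eq, Set.ncard_eq_three, p.eta.symm]
  exact ⟨_, _, _, hne (by decide) _, hne (by decide) _, hne (by decide) _,
    Lam.neighborSet_eq n _ _⟩

def MKFlat : SimpleGraph RSet where
  Adj u v := MK.Adj u v ∧ zetaZ u v = 0
  symm := ⟨fun u v ⟨huv, h⟩ => ⟨huv.symm, by rw [zetaZ_anti, h, neg_zero]⟩⟩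

instance : DecidableRel MKFlat.Adj := fun u v =>
  inferInstanceAs (Decidable (MK.Adj u v ∧ zetaZ u v = 0))

-- `idR` has eccentricity 6 in `MKFlat`.
lemma MKFlat.connected : MKFlat.Connected :=
  MKFlat.connected_of_forall_mem_reachFinset (r := idR) (k := 6) (by decide)

def MKFlat.toLam (n : ℕ) (x : NQuad n) : MKFlat →g Lam n where
  toFun u := (u, x)
  map_rel' := fun ⟨huv, h⟩ => ⟨huv, by simp [h, castQuad_zero]⟩

lemma Lam.reachable_of_snd_eq (n : ℕ) (u v : RSet) (x : NQuad n) :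
    (Lam n).Reachable (u, x) (v, x) :=
  (MKFlat.connected.preconnected u v).map (MKFlat.toLam n x)

def Lam.shifts (n : ℕ) : AddSubgroup (NQuad n) where
  carrier := {t | ∀ u x, (Lam n).Reachable (u, x) (u, x + t)}
  zero_mem' u x := by rw [add_zero]
  add_mem' hs ht u x := by rw [← add_assoc]; exact (hs u x).trans (ht u _)
  neg_mem' {t} ht u x := by simpa [sub_eq_add_neg] using (ht u (x - t)).symm

lemma Lam.castQuad_zetaZ_mem_shifts (n : ℕ) {v w : RSet} (hvw : MK.Adj v w) :
    castQuad n (zetaZ v w) ∈ Lam.shifts n := fun u x =>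
  ((Lam.reachable_of_snd_eq n u v x).trans (SimpleGraph.Adj.reachable ⟨hvw, rfl⟩)).trans
    (Lam.reachable_of_snd_eq n w u _)

lemma Lam.shifts_eq_top (n : ℕ) : Lam.shifts n = ⊤ := by
  refine (AddSubgroup.eq_top_iff' _).mpr fun y => ?_
  obtain ⟨p, rfl⟩ := castQuad_surjective n y
  have h₁ : castQuad n (1, 0, 0, 0) ∈ Lam.shifts n :=
    Lam.castQuad_zetaZ_mem_shifts n (v := idR) (w := cR) (by decide)
  have h₂ : castQuad n (0, 1, 0, 0) ∈ Lam.shifts n :=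
    Lam.castQuad_zetaZ_mem_shifts n (v := cR) (w := bcR) (by decide)
  have h₃ : castQuad n (0, 0, 1, 0) ∈ Lam.shifts n :=
    Lam.castQuad_zetaZ_mem_shifts n (v := bcR) (w := bzR) (by decide)
  have h₄ : castQuad n (0, 0, 0, 1) ∈ Lam.shifts n :=
    Lam.castQuad_zetaZ_mem_shifts n (v := bzR) (w := zR) (by decide)
  rw [castQuad_eq_zsmul_basis]
  exact add_mem (add_mem (add_mem (zsmul_mem h₁ _) (zsmul_mem h₂ _)) (zsmul_mem h₃ _))
    (zsmul_mem h₄ _)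

lemma Lam.connected (n : ℕ) : (Lam n).Connected := by
  have : Nonempty (RSet × NQuad n) := ⟨(idR, 0)⟩
  refine ⟨fun ⟨u, x⟩ ⟨v, y⟩ => (Lam.reachable_of_snd_eq n u v x).trans ?_⟩
  have hshift : y - x ∈ Lam.shifts n := Lam.shifts_eq_top n ▸ AddSubgroup.mem_top _
  simpa using hshift v x

lemma card_RSet_prod_NQuad (n : ℕ) : Nat.card (RSet × NQuad n) = 16 * n ^ 4 := by
  simp only [Nat.card_prod, Nat.card_zmod]
  ring

theorem statement7_general (n : ℕ) :
    (Lam n).Connected ∧ (∀ p : RSet × NQuad n, Nat.card ((Lam n).neighborSet p) = 3) ∧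
    Nat.card (RSet × NQuad n) = 16 * n ^ 4 :=
  ⟨Lam.connected n, Lam.card_neighborSet n, card_RSet_prod_NQuad n⟩

/-- For `n ≥ 1`, the covering graph `Λ_n` is a connected cubic graph on `16n⁴` vertices. -/
theorem statement7 (n : ℕ) (hn : 1 ≤ n) :
    (Lam n).Connected ∧ (∀ p : RSet × NQuad n, Nat.card ((Lam n).neighborSet p) = 3) ∧
    Nat.card (RSet × NQuad n) = 16 * n ^ 4 :=
  statement7_general n
end

section
/- Let Λ be a finite connected 3-regular simple graph admitting a subgroup B ≤ Aut(Λ) that acts sharply transitively on the 2-arcs of Λ, and suppose d := dim_{F_2} E_1(Λ) ≥ 2. Then the lexicographic product Γ = Λ[K̄_2] admits a subgroup G ≤ Aut(Γ) acting transitively on the arcs of Γ such that every vertex-stabiliser G_v has order 3·2^{d} and the local action G_v^{Γ(v)} is permutation isomorphic to S_4(6d). -/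
/-- A permutation `g` of the vertex set is an automorphism of the graph `Γ`. -/
def IsGraphAut {V : Type*} (Γ : SimpleGraph V) (g : Equiv.Perm V) : Prop :=
  ∀ u v : V, Γ.Adj (g u) (g v) ↔ Γ.Adj u v

/-- The subgroup `G` acts transitively on the arcs of `Γ`. -/
def ArcTransitiveOn {V : Type*} (Γ : SimpleGraph V) (G : Subgroup (Equiv.Perm V)) : Prop :=
  ∀ u v u' v' : V, Γ.Adj u v → Γ.Adj u' v' → ∃ g ∈ G, g u = u' ∧ g v = v'

/-- `G` acts sharply transitively (transitively and freely) on the arcs of `Γ`. -/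
def SharplyArcTransitiveOn {V : Type*} (Γ : SimpleGraph V)
    (G : Subgroup (Equiv.Perm V)) : Prop :=
  ∀ u v u' v' : V, Γ.Adj u v → Γ.Adj u' v' →
    ∃! g : G, (g : Equiv.Perm V) u = u' ∧ (g : Equiv.Perm V) v = v'

/-- `G` acts sharply transitively (transitively and freely) on the 2-arcs of `Γ`. -/
def SharplyTwoArcTransitiveOn {V : Type*} (Γ : SimpleGraph V)
    (G : Subgroup (Equiv.Perm V)) : Prop :=
  ∀ u v w u' v' w' : V, Γ.Adj u v → Γ.Adj v w → u ≠ w →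
    Γ.Adj u' v' → Γ.Adj v' w' → u' ≠ w' →
      ∃! g : G, (g : Equiv.Perm V) u = u' ∧ (g : Equiv.Perm V) v = v' ∧
        (g : Equiv.Perm V) w = w'

/-- The local action of `G` at `v`: the set of permutations of the neighbourhood of `v`
induced by elements of the vertex-stabiliser of `v` in `G`. -/
def localActionSet {V : Type*} (Γ : SimpleGraph V) (G : Subgroup (Equiv.Perm V)) (v : V) :
    Set (Equiv.Perm (Γ.neighborSet v)) :=
  {p | ∃ g ∈ G, g v = v ∧ ∀ u : Γ.neighborSet v, (p u : V) = g (u : V)}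

/-- Permutation isomorphism between a set of permutations of `Ω` and a set of
permutations of `Δ`: a bijection `e : Ω ≃ Δ` conjugating the first set onto the second. -/
def PermIsomorphic {Ω Δ : Type*} (P : Set (Equiv.Perm Ω)) (Q : Set (Equiv.Perm Δ)) : Prop :=
  ∃ e : Ω ≃ Δ, ∀ q : Equiv.Perm Δ, q ∈ Q ↔ ∃ p ∈ P, ∀ ω : Ω, e (p ω) = q (e ω)

open scoped Classical in
/-- The 1-eigenspace of the adjacency matrix of `Λ` over `F₂`. -/
noncomputable def eigOne {V : Type*} [Fintype V] (Λ : SimpleGraph V) :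
    Submodule (ZMod 2) (V → ZMod 2) :=
  LinearMap.ker (Matrix.toLin' (Λ.adjMatrix (ZMod 2)) - LinearMap.id)

/-- The lexicographic product `Λ[K̄₂]`: vertex set `V(Λ) × F₂`, with `(u,i)` adjacent to
`(v,j)` iff `u` is adjacent to `v` in `Λ`. -/
def lexK2 {V : Type*} (Λ : SimpleGraph V) : SimpleGraph (V × ZMod 2) where
  Adj p q := Λ.Adj p.1 q.1
  symm := ⟨fun _ _ h => Λ.adj_symm h⟩
  loopless := ⟨fun p h => Λ.ne_of_adj h rfl⟩

/-- The subgroup `⟨(1 2),(3 4)⟩` of `Sym(4)` (0-indexed: `⟨(0 1),(2 3)⟩`). -/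
def Hd : Subgroup (Equiv.Perm (Fin 4)) :=
  Subgroup.closure {Equiv.swap 0 1, Equiv.swap 2 3}

/-- `S₄(6d)`: the image of `Sym(4)` in the symmetric group on the 6 left cosets of
`⟨(1 2),(3 4)⟩`, under the left multiplication action. -/
def S46d : Subgroup (Equiv.Perm (Equiv.Perm (Fin 4) ⧸ Hd)) :=
  (MulAction.toPermHom (Equiv.Perm (Fin 4)) (Equiv.Perm (Fin 4) ⧸ Hd)).range

/-!
Let `E = E₁(Λ)` and `d = dim E`. The group `E ⋊ B` acts on `V × F₂` by `(v, i) ↦ (b v, i + x v)`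
and preserves `Λ[K̄₂]`. The stabiliser of `(v, i)` is `B_v × {x ∈ E | x v = 0}`. By sharp
2-arc-transitivity `B_v` acts faithfully as `Sym(Λ(v)) ≅ S₃`, and since the constant vector lies in
`E` (the valency is odd), evaluation at `v` is onto `F₂`; so `|G_(v,i)| = 6 · 2^(d-1)`.

If `d ≥ 2`, connectivity gives `x ∈ E` taking different values along an edge. After adding a
constant, `x` vanishes at one end `a`; its values on the three neighbours of `a` then sum to `0`, so
`x` is `0` on one neighbour of `a` and `1` on the other two. Moving this pattern around by the arc-transitive `B`, the
restriction to `Λ(v)` maps `{x ∈ E | x v = 0}` onto all sum-zero vectors, and any pair of values is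
attained along any edge (hence arc-transitivity). The local action is therefore the group of twists
`(n, j) ↦ (σ n, j + y n)` with `σ ∈ Sym(Λ(v))` and `∑ y = 0`, i.e. `F₂² ⋊ S₃ ≅ S₄`, acting like `S₄`
on the six cosets of `⟨(1 2), (3 4)⟩`.
-/

open Equiv

theorem permIsomorphic_iff {Ω Δ : Type*} {P : Set (Perm Ω)} {Q : Set (Perm Δ)} :
    PermIsomorphic P Q ↔ ∃ e : Ω ≃ Δ, Q = e.permCongr '' P := by
  refine exists_congr fun e => ?_
  have key : ∀ p q, e.permCongr p = q ↔ ∀ ω, e (p ω) = q (e ω) := fun p q => by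
    simp only [Equiv.ext_iff, permCongr_apply, e.forall_congr_left,
      apply_symm_apply]
  simp only [Set.ext_iff, Set.mem_image, key]

theorem PermIsomorphic.trans {Ω Δ Θ : Type*} {P : Set (Perm Ω)} {Q : Set (Perm Δ)}
    {R : Set (Perm Θ)} (hPQ : PermIsomorphic P Q) (hQR : PermIsomorphic Q R) :
    PermIsomorphic P R := by
  obtain ⟨e, rfl⟩ := permIsomorphic_iff.mp hPQ
  obtain ⟨f, rfl⟩ := permIsomorphic_iff.mp hQR
  exact permIsomorphic_iff.mpr ⟨e.trans f, by rw [Set.image_image]; rfl⟩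

def twist {α : Type*} (σ : Perm α) (y : α → ZMod 2) : Perm (α × ZMod 2) :=
  prodShear σ fun a => Equiv.addRight (y a)

@[simp]
theorem twist_apply {α : Type*} (σ : Perm α) (y : α → ZMod 2) (p : α × ZMod 2) :
    twist σ y p = (σ p.1, p.2 + y p.1) := rfl

def twistModel (α : Type*) [Fintype α] : Set (Perm (α × ZMod 2)) :=
  {p | ∃ σ y, ∑ a, y a = 0 ∧ p = twist σ y}

theorem permIsomorphic_twistModel {α β : Type*} [Fintype α] [Fintype β] (e : α ≃ β) :
    PermIsomorphic (twistModel α) (twistModel β) := by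
  refine permIsomorphic_iff.mpr ⟨e.prodCongr (Equiv.refl _), ?_⟩
  have key : ∀ σ y, (e.prodCongr (Equiv.refl _)).permCongr (twist σ y) =
      twist (e.permCongr σ) (fun b => y (e.symm b)) := fun σ y => by ext <;> simp
  ext q
  constructor
  · rintro ⟨σ, y, hy, rfl⟩
    refine ⟨twist (e.symm.permCongr σ) (fun a => y (e a)), ⟨_, _, by rwa [e.sum_comp y], rfl⟩, ?_⟩
    rw [key]; congr 1 <;> ext <;> simp
  · rintro ⟨_, ⟨σ, y, hy, rfl⟩, rfl⟩
    exact ⟨_, _, by rwa [e.symm.sum_comp y], key σ y⟩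

theorem permCongr_prodSubtypeFst_eq_twist_iff {α : Type*} {s : Set α}
    (p : Perm {q : α × ZMod 2 // q.1 ∈ s}) {σ : Perm α} (hσ : ∀ a, σ a ∈ s ↔ a ∈ s)
    (x : α → ZMod 2) :
    prodSubtypeFstEquivSubtypeProd.permCongr p = twist (σ.subtypePerm hσ) (fun a => x a) ↔
      ∀ q, (p q : α × ZMod 2) = twist σ x q := by
  rw [Equiv.ext_iff, ← prodSubtypeFstEquivSubtypeProd.forall_congr_right]
  simp [prodSubtypeFstEquivSubtypeProd, Prod.ext_iff, Subtype.ext_iff]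

theorem mem_Hd_iff (g : Perm (Fin 4)) :
    g ∈ Hd ↔ g ∈ ({1, swap 0 1, swap 2 3, swap 0 1 * swap 2 3} : Finset (Perm (Fin 4))) := by
  let K : Subgroup (Perm (Fin 4)) :=
    { carrier := ↑({1, swap 0 1, swap 2 3, swap 0 1 * swap 2 3} : Finset (Perm (Fin 4)))
      one_mem' := by decide
      mul_mem' := by decide
      inv_mem' := by decide }
  have hK : Hd = K := by
    refine le_antisymm (Subgroup.closure_le _ |>.mpr ?_) fun g hg => ?_
    · rintro g (rfl | rfl) <;> simp [K]
    · have hs : swap (0 : Fin 4) 1 ∈ Hd := Subgroup.subset_closure (by simp)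
      have ht : swap (2 : Fin 4) 3 ∈ Hd := Subgroup.subset_closure (by simp)
      simp only [K, Subgroup.mem_mk, Submonoid.mem_mk, Subsemigroup.mem_mk, Finset.coe_insert,
        Finset.coe_singleton, Set.mem_insert_iff, Set.mem_singleton_iff] at hg
      rcases hg with rfl | rfl | rfl | rfl
      exacts [one_mem _, hs, ht, mul_mem hs ht]
  rw [hK]; rfl

instance : DecidablePred (· ∈ Hd) := fun g => decidable_of_iff _ (mem_Hd_iff g).symm

-- Mathlib's instances go through `QuotientGroup.leftRelDecidable`, whose cast blocks `decide`.
instance (priority := high) : DecidableRel (QuotientGroup.leftRel Hd).r :=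
  fun a b => decidable_of_iff (a⁻¹ * b ∈ Hd) QuotientGroup.leftRel_apply.symm

instance (priority := high) : DecidableEq (Perm (Fin 4) ⧸ Hd) :=
  Quotient.decidableEq

/-- The coset `g ⟨(0 1), (2 3)⟩` is determined by the ordered pair `(g {0, 1}, g {2, 3})`; the
representative of `(k, j)` realises the `k`-th splitting of `Fin 4` into two pairs, in the
order `j`. -/
def cosetRep : Fin 3 × ZMod 2 → Perm (Fin 4)
  | (0, j) => if j = 0 then 1 else swap 0 2 * swap 1 3
  | (1, j) => if j = 0 then swap 1 2 else swap 0 1 * swap 1 2 * swap 1 3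
  | (2, j) => if j = 0 then swap 1 2 * swap 1 3 else swap 0 1 * swap 1 2

theorem bijective_mk_cosetRep :
    Function.Bijective fun ω => (cosetRep ω : Perm (Fin 4) ⧸ Hd) := by
  decide

theorem exists_twist_of_perm : ∀ s : Perm (Fin 4), ∃ σ : Perm (Fin 3), ∃ y : Fin 3 → ZMod 2,
    ∑ k, y k = 0 ∧ ∀ ω, (cosetRep (twist σ y ω) : Perm (Fin 4) ⧸ Hd) = s • ↑(cosetRep ω) := by
  decide

theorem exists_perm_of_twist : ∀ σ : Perm (Fin 3), ∀ y : Fin 3 → ZMod 2, ∑ k, y k = 0 →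
    ∃ s : Perm (Fin 4), ∀ ω, (cosetRep (twist σ y ω) : Perm (Fin 4) ⧸ Hd) = s • ↑(cosetRep ω) := by
  decide

theorem permIsomorphic_twistModel_S46d :
    PermIsomorphic (twistModel (Fin 3)) (S46d : Set (Perm (Perm (Fin 4) ⧸ Hd))) := by
  let e := Equiv.ofBijective _ bijective_mk_cosetRep
  have key : ∀ σ y (s : Perm (Fin 4)), e.permCongr (twist σ y) = MulAction.toPerm s ↔
      ∀ ω, (cosetRep (twist σ y ω) : Perm (Fin 4) ⧸ Hd) = s • ↑(cosetRep ω) := fun σ y s => by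
    rw [Equiv.ext_iff, ← e.forall_congr_right]
    simp only [permCongr_apply, symm_apply_apply, MulAction.toPerm_apply]
    rfl
  refine permIsomorphic_iff.mpr ⟨e, Set.ext fun q => ⟨?_, ?_⟩⟩
  · rintro ⟨s, rfl⟩
    obtain ⟨σ, y, hy, h⟩ := exists_twist_of_perm s
    exact ⟨_, ⟨σ, y, hy, rfl⟩, (key σ y s).mpr h⟩
  · rintro ⟨_, ⟨σ, y, hy, rfl⟩, rfl⟩
    obtain ⟨s, h⟩ := exists_perm_of_twist σ y hy
    exact ⟨s, ((key σ y s).mpr h).symm⟩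

section TwistGroup

variable {α : Type*}

@[simp]
theorem twist_one : twist (1 : Perm α) 0 = 1 := by
  ext <;> simp

theorem twist_mul (σ τ : Perm α) (x y : α → ZMod 2) :
    twist σ x * twist τ y = twist (σ * τ) (fun a => y a + x (τ a)) := by
  ext <;> simp [add_assoc]

theorem twist_inv (σ : Perm α) (x : α → ZMod 2) :
    (twist σ x)⁻¹ = twist σ⁻¹ (fun a => x (σ⁻¹ a)) := by
  rw [inv_eq_iff_mul_eq_one, twist_mul]
  ext <;> simp [CharTwo.add_self_eq_zero]

theorem twist_inj {σ τ : Perm α} {x y : α → ZMod 2} :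
    twist σ x = twist τ y ↔ σ = τ ∧ x = y := by
  refine ⟨fun h => ⟨Equiv.ext fun a => ?_, funext fun a => ?_⟩, fun ⟨hστ, hxy⟩ => hστ ▸ hxy ▸ rfl⟩
  · simpa using congr_arg Prod.fst (Equiv.ext_iff.mp h (a, 0))
  · simpa using congr_arg Prod.snd (Equiv.ext_iff.mp h (a, 0))

theorem twist_apply_eq_self_iff {σ : Perm α} {x : α → ZMod 2} {a : α} {i : ZMod 2} :
    twist σ x (a, i) = (a, i) ↔ σ a = a ∧ x a = 0 := by
  simp

def twistGroup (B : Subgroup (Perm α)) (E : Submodule (ZMod 2) (α → ZMod 2))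
    (hE : ∀ σ ∈ B, ∀ x ∈ E, (fun a => x (σ a)) ∈ E) : Subgroup (Perm (α × ZMod 2)) where
  carrier := {g | ∃ σ ∈ B, ∃ x ∈ E, twist σ x = g}
  one_mem' := ⟨1, one_mem B, 0, zero_mem E, twist_one⟩
  mul_mem' := by
    rintro _ _ ⟨σ, hσ, x, hx, rfl⟩ ⟨τ, hτ, y, hy, rfl⟩
    exact ⟨σ * τ, mul_mem hσ hτ, _, add_mem hy (hE τ hτ x hx), (twist_mul σ τ x y).symm⟩
  inv_mem' := by
    rintro _ ⟨σ, hσ, x, hx, rfl⟩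
    exact ⟨σ⁻¹, inv_mem hσ, _, hE _ (inv_mem hσ) x hx, (twist_inv σ x).symm⟩

variable {B : Subgroup (Perm α)} {E : Submodule (ZMod 2) (α → ZMod 2)}
  {hE : ∀ σ ∈ B, ∀ x ∈ E, (fun a => x (σ a)) ∈ E}

theorem card_twistGroup_inf_stabilizer (a : α) (i : ZMod 2) :
    Nat.card ↥(twistGroup B E hE ⊓ MulAction.stabilizer (Perm (α × ZMod 2)) (a, i)) =
      Nat.card ↥(B ⊓ MulAction.stabilizer (Perm α) a) *
        Nat.card ↥(LinearMap.ker ((LinearMap.proj a).comp E.subtype)) := by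
  rw [← Nat.card_prod]
  refine Nat.card_congr (Equiv.ofBijective (fun p => ⟨twist p.1 p.2,
    ⟨p.1, p.1.2.1, p.2, p.2.1.2, rfl⟩, twist_apply_eq_self_iff.mpr ⟨p.1.2.2, p.2.2⟩⟩) ⟨?_, ?_⟩).symm
  · rintro ⟨σ, x⟩ ⟨τ, y⟩ h
    obtain ⟨hστ, hxy⟩ := twist_inj.mp (congr_arg Subtype.val h)
    ext1 <;> ext1 <;> [exact hστ; exact Subtype.ext hxy]
  · rintro ⟨_, ⟨σ, hσB, x, hx, rfl⟩, hfix⟩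
    obtain ⟨hσa, hxa⟩ := twist_apply_eq_self_iff.mp hfix
    exact ⟨(⟨σ, hσB, hσa⟩, ⟨⟨x, hx⟩, hxa⟩), rfl⟩

end TwistGroup

theorem Equiv.Perm.eq_one_of_card_eq_three {β : Type*} [Fintype β] [DecidableEq β]
    (h3 : Fintype.card β = 3) {ρ : Perm β} {a b : β} (hab : a ≠ b) (ha : ρ a = a)
    (hb : ρ b = b) : ρ = 1 := by
  by_contra hρ
  have hsub : ρ.support ⊆ (Finset.univ.erase a).erase b := fun c hc => by
    rw [Perm.mem_support] at hc
    exact Finset.mem_erase.mpr ⟨by rintro rfl; exact hc hb,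
      Finset.mem_erase.mpr ⟨by rintro rfl; exact hc ha, Finset.mem_univ c⟩⟩
  have := (Finset.card_le_card hsub).trans_lt' (ρ.two_le_card_support_of_ne_one hρ)
  rw [Finset.card_erase_of_mem (Finset.mem_erase.mpr ⟨hab.symm, Finset.mem_univ b⟩),
    Finset.card_erase_of_mem (Finset.mem_univ a), Finset.card_univ, h3] at this
  omega

theorem exists_eq_zero_forall_ne_eq_one_of_sum_eq_zero {β : Type*} [Fintype β]
    (h3 : Fintype.card β = 3) {y : β → ZMod 2} (hsum : ∑ b, y b = 0) (hy : y ≠ 0) :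
    ∃ c, y c = 0 ∧ ∀ b, b ≠ c → y b = 1 := by
  have key : ∀ z : Fin 3 → ZMod 2, ∑ k, z k = 0 → z ≠ 0 →
      ∃ c, z c = 0 ∧ ∀ k, k ≠ c → z k = 1 := by decide
  let e := Fintype.equivFinOfCardEq h3
  obtain ⟨c, hc, hne⟩ := key (fun k => y (e.symm k)) (by rwa [e.symm.sum_comp y])
    fun h => hy (funext fun b => by simpa using congr_fun h (e b))
  exact ⟨e.symm c, hc, fun b hb => by simpa using hne (e b) (by rintro rfl; simp at hb)⟩

theorem exists_mem_apply_ne_apply_of_two_le_finrank {α : Type*}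
    {E : Submodule (ZMod 2) (α → ZMod 2)} (hE : 2 ≤ Module.finrank (ZMod 2) E) (a : α) :
    ∃ x ∈ E, ∃ u, x u ≠ x a := by
  by_contra! hconst
  have hle : E ≤ Submodule.span (ZMod 2) {1} := fun x hx =>
    Submodule.mem_span_singleton.mpr ⟨x a, funext fun u => by simp [hconst x hx u]⟩
  have := (Submodule.finrank_mono hle).trans (finrank_span_le_card ({1} : Set (α → ZMod 2)))
  simp at this
  omega

theorem two_mul_card_ker_proj_comp_subtype {α : Type*} [Finite α]
    (E : Submodule (ZMod 2) (α → ZMod 2)) (h1 : (1 : α → ZMod 2) ∈ E) (a : α) :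
    2 * Nat.card ↥(LinearMap.ker ((LinearMap.proj a).comp E.subtype)) =
      2 ^ Module.finrank (ZMod 2) E := by
  set f := (LinearMap.proj a).comp E.subtype
  have hf : LinearMap.range f = ⊤ := LinearMap.range_eq_top.mpr fun t => ⟨t • ⟨1, h1⟩, by simp [f]⟩
  have := f.finrank_range_add_finrank_ker
  rw [hf, finrank_top, Module.finrank_self] at this
  rw [Module.natCard_eq_pow_finrank (K := ZMod 2), Nat.card_zmod, ← this, pow_add, pow_one]

section EigOne

open scoped Classical

variable {V : Type*} [Fintype V] {Λ : SimpleGraph V}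

theorem mem_eigOne_iff {x : V → ZMod 2} :
    x ∈ eigOne Λ ↔ ∀ v, ∑ u : Λ.neighborSet v, x u = x v := by
  simp only [eigOne, LinearMap.mem_ker, LinearMap.sub_apply, Matrix.toLin'_apply,
    LinearMap.id_apply, sub_eq_zero, funext_iff, SimpleGraph.adjMatrix_mulVec_apply]
  refine forall_congr' fun v => ?_
  rw [Finset.sum_subtype (p := (· ∈ Λ.neighborSet v)) _ (fun u => Λ.mem_neighborFinset v u)]

theorem comp_mem_eigOne {g : Perm V} (hg : IsGraphAut Λ g) {x : V → ZMod 2}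
    (hx : x ∈ eigOne Λ) : (fun v => x (g v)) ∈ eigOne Λ := by
  rw [mem_eigOne_iff] at hx ⊢
  intro v
  rw [← hx (g v)]
  exact (g.subtypeEquiv fun u => (hg v u).symm).sum_comp fun u => x u

theorem one_mem_eigOne (hodd : ∀ v, Odd (Nat.card (Λ.neighborSet v))) : 1 ∈ eigOne Λ := by
  refine mem_eigOne_iff.mpr fun v => ?_
  simp only [Pi.one_apply, Finset.sum_const, Finset.card_univ, nsmul_eq_mul, mul_one,
    ← Nat.card_eq_fintype_card]
  exact (hodd v).natCast_zmod_two

end EigOne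

section TwoArcTransitive

open scoped Classical

variable {V : Type*} {Λ : SimpleGraph V}

theorem IsGraphAut.mem_neighborSet_iff {g : Perm V} (hg : IsGraphAut Λ g) {v : V} (hv : g v = v)
    (u : V) : g u ∈ Λ.neighborSet v ↔ u ∈ Λ.neighborSet v := by
  conv_lhs => rw [← hv]
  exact hg v u

variable [Fintype V]

theorem exists_adj_ne (hdeg : ∀ v, 1 < Nat.card (Λ.neighborSet v)) {v u : V} (h : Λ.Adj v u) :
    ∃ w, Λ.Adj v w ∧ w ≠ u := by
  have : Nontrivial (Λ.neighborSet v) := Finite.one_lt_card_iff_nontrivial.mp (hdeg v)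
  obtain ⟨w, hw⟩ := exists_ne (⟨u, h⟩ : Λ.neighborSet v)
  exact ⟨w, w.2, fun h => hw (Subtype.ext h)⟩

variable {B : Subgroup (Perm V)}

theorem SharplyTwoArcTransitiveOn.exists_apply_eq_apply_eq (hBt : SharplyTwoArcTransitiveOn Λ B)
    (hdeg : ∀ v, 1 < Nat.card (Λ.neighborSet v)) {u v u' v' : V} (h : Λ.Adj u v)
    (h' : Λ.Adj u' v') : ∃ b ∈ B, b u = u' ∧ b v = v' := by
  obtain ⟨w, hw, hwu⟩ := exists_adj_ne hdeg h.symm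
  obtain ⟨w', hw', hwu'⟩ := exists_adj_ne hdeg h'.symm
  obtain ⟨b, ⟨hbu, hbv, -⟩, -⟩ := hBt u v w u' v' w' h hw hwu.symm h' hw' hwu'.symm
  exact ⟨b, b.2, hbu, hbv⟩

theorem SharplyTwoArcTransitiveOn.bijective_subtypePerm (hBt : SharplyTwoArcTransitiveOn Λ B)
    (hBaut : ∀ b ∈ B, IsGraphAut Λ b) (hreg : ∀ v, Nat.card (Λ.neighborSet v) = 3) (v : V) :
    Function.Bijective fun b : ↥(B ⊓ MulAction.stabilizer (Perm V) v) =>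
      (b : Perm V).subtypePerm ((hBaut b b.2.1).mem_neighborSet_iff b.2.2) := by
  have h3 : Fintype.card (Λ.neighborSet v) = 3 := by rw [← Nat.card_eq_fintype_card, hreg v]
  obtain ⟨m, n, hmn⟩ := Fintype.exists_pair_of_one_lt_card (by rw [h3]; norm_num)
  have hmn' : (m : V) ≠ n := fun h => hmn (Subtype.ext h)
  refine ⟨fun b c hbc => ?_, fun τ => ?_⟩
  · have hb := fun w : Λ.neighborSet v => congr_arg Subtype.val (Equiv.ext_iff.mp hbc w)
    simp only [Perm.subtypePerm_apply] at hb
    obtain ⟨_, -, huniq⟩ := hBt m v n ((b : Perm V) m) v ((b : Perm V) n) (Λ.adj_symm m.2) n.2 hmn'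
      ((hBaut b b.2.1).mem_neighborSet_iff b.2.2 m |>.mpr m.2).symm
      ((hBaut b b.2.1).mem_neighborSet_iff b.2.2 n |>.mpr n.2)
      ((b : Perm V).injective.ne hmn')
    have hbc' := (huniq ⟨b, b.2.1⟩ ⟨rfl, b.2.2, rfl⟩).trans
      (huniq ⟨c, c.2.1⟩ ⟨(hb m).symm, c.2.2, (hb n).symm⟩).symm
    exact Subtype.ext (congr_arg (fun g : B => (g : Perm V)) hbc')
  · obtain ⟨b, ⟨hbm, hbv, hbn⟩, -⟩ := hBt m v n (τ m) v (τ n) (Λ.adj_symm m.2) n.2 hmn'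
      (Λ.adj_symm (τ m).2) (τ n).2 fun h => hmn (τ.injective (Subtype.ext h))
    refine ⟨⟨b, b.2, hbv⟩, ?_⟩
    rw [← inv_mul_eq_one]
    refine Perm.eq_one_of_card_eq_three h3 hmn ?_ ?_ <;>
      rw [Perm.mul_apply, Perm.inv_eq_iff_eq] <;>
      [exact Subtype.ext hbm.symm; exact Subtype.ext hbn.symm]

theorem SharplyTwoArcTransitiveOn.card_inf_stabilizer (hBt : SharplyTwoArcTransitiveOn Λ B)
    (hBaut : ∀ b ∈ B, IsGraphAut Λ b) (hreg : ∀ v, Nat.card (Λ.neighborSet v) = 3) (v : V) :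
    Nat.card ↥(B ⊓ MulAction.stabilizer (Perm V) v) = 6 := by
  rw [Nat.card_eq_of_bijective _ (hBt.bijective_subtypePerm hBaut hreg v), Nat.card_perm, hreg]
  rfl

end TwoArcTransitive

section Cubic

open scoped Classical

variable {V : Type*} [Fintype V] {Λ : SimpleGraph V}

theorem exists_mem_eigOne_nbr_pattern (hconn : Λ.Connected)
    (hd : 2 ≤ Module.finrank (ZMod 2) (eigOne Λ)) (hreg : ∀ v, Nat.card (Λ.neighborSet v) = 3) :
    ∃ x ∈ eigOne Λ, ∃ a c, Λ.Adj a c ∧ x a = 0 ∧ x c = 0 ∧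
      ∀ n, Λ.Adj a n → n ≠ c → x n = 1 := by
  have h1 : 1 ∈ eigOne Λ := one_mem_eigOne fun v => by rw [hreg v]; decide
  obtain ⟨w⟩ := hconn.nonempty
  obtain ⟨x, hx, u, hu⟩ := exists_mem_apply_ne_apply_of_two_le_finrank hd w
  obtain ⟨d, -, hda, hdc⟩ := (hconn.preconnected u w).some.exists_boundary_dart
    {t | x t = x u} rfl hu.symm
  set x' := x + x d.fst • 1
  have hx' : x' ∈ eigOne Λ := add_mem hx (Submodule.smul_mem _ _ h1)
  have hx'a : x' d.fst = 0 := by simp [x', CharTwo.add_self_eq_zero]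
  have hy : (fun n : Λ.neighborSet d.fst => x' n) ≠ 0 := fun h => hdc <| by
    have := congr_fun h ⟨d.snd, d.adj⟩
    simp only [x', Pi.add_apply, Pi.smul_apply, Pi.one_apply, smul_eq_mul, mul_one,
      Pi.zero_apply, CharTwo.add_eq_zero] at this
    exact this.trans hda
  obtain ⟨c, hc, hne⟩ := exists_eq_zero_forall_ne_eq_one_of_sum_eq_zero
    (by rw [← Nat.card_eq_fintype_card, hreg]) ((mem_eigOne_iff.mp hx' d.fst).trans hx'a) hy
  exact ⟨x', hx', d.fst, c, c.2, hx'a, hc, fun n hn hnc => hne ⟨n, hn⟩ fun h => hnc (by rw [← h])⟩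

variable {B : Subgroup (Perm V)}

theorem exists_mem_eigOne_nbr_pattern_of_adj (hconn : Λ.Connected)
    (hd : 2 ≤ Module.finrank (ZMod 2) (eigOne Λ)) (hreg : ∀ v, Nat.card (Λ.neighborSet v) = 3)
    (hBaut : ∀ b ∈ B, IsGraphAut Λ b) (hBt : SharplyTwoArcTransitiveOn Λ B) {v c : V}
    (hvc : Λ.Adj v c) :
    ∃ x ∈ eigOne Λ, x v = 0 ∧ x c = 0 ∧ ∀ n, Λ.Adj v n → n ≠ c → x n = 1 := by
  obtain ⟨x, hx, a, c₀, hac, hxa, hxc, hxn⟩ := exists_mem_eigOne_nbr_pattern hconn hd hreg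
  obtain ⟨b, hb, rfl, rfl⟩ :=
    hBt.exists_apply_eq_apply_eq (fun v => by rw [hreg v]; norm_num) hac hvc
  refine ⟨fun t => x (b⁻¹ t), comp_mem_eigOne (hBaut _ (inv_mem hb)) hx, by simpa, by simpa,
    fun n hn hnc => hxn _ ?_ ?_⟩
  · simpa using (hBaut b hb a (b⁻¹ n)).mp (by simpa using hn)
  · rintro rfl; simp at hnc

theorem exists_mem_eigOne_restrict_eq (hconn : Λ.Connected)
    (hd : 2 ≤ Module.finrank (ZMod 2) (eigOne Λ)) (hreg : ∀ v, Nat.card (Λ.neighborSet v) = 3)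
    (hBaut : ∀ b ∈ B, IsGraphAut Λ b) (hBt : SharplyTwoArcTransitiveOn Λ B) (v : V)
    (y : Λ.neighborSet v → ZMod 2) (hy : ∑ n, y n = 0) :
    ∃ x ∈ eigOne Λ, x v = 0 ∧ ∀ n : Λ.neighborSet v, x n = y n := by
  rcases eq_or_ne y 0 with rfl | hy0
  · exact ⟨0, zero_mem _, rfl, fun _ => rfl⟩
  obtain ⟨c, hc, hne⟩ := exists_eq_zero_forall_ne_eq_one_of_sum_eq_zero
    (by rw [← Nat.card_eq_fintype_card, hreg]) hy hy0
  obtain ⟨x, hx, hxv, hxc, hxn⟩ :=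
    exists_mem_eigOne_nbr_pattern_of_adj hconn hd hreg hBaut hBt c.2
  refine ⟨x, hx, hxv, fun n => ?_⟩
  rcases eq_or_ne n c with rfl | hnc
  · rw [hxc, hc]
  · rw [hxn n n.2 fun h => hnc (Subtype.ext h), hne n hnc]

theorem exists_mem_eigOne_apply_eq_apply_eq (hconn : Λ.Connected)
    (hd : 2 ≤ Module.finrank (ZMod 2) (eigOne Λ)) (hreg : ∀ v, Nat.card (Λ.neighborSet v) = 3)
    (hBaut : ∀ b ∈ B, IsGraphAut Λ b) (hBt : SharplyTwoArcTransitiveOn Λ B) {u w : V}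
    (huw : Λ.Adj u w) (i j : ZMod 2) : ∃ x ∈ eigOne Λ, x u = i ∧ x w = j := by
  obtain ⟨c, huc, hcw⟩ := exists_adj_ne (fun v => by rw [hreg v]; norm_num) huw
  obtain ⟨x, hx, hxu, -, hxn⟩ :=
    exists_mem_eigOne_nbr_pattern_of_adj hconn hd hreg hBaut hBt huc
  have hxw : x w = 1 := hxn w huw hcw.symm
  -- `x` and the constant `1` span all value pairs at the edge
  refine ⟨(j + i) • x + i • 1, add_mem (Submodule.smul_mem _ _ hx)
    (Submodule.smul_mem _ _ (one_mem_eigOne fun v => by rw [hreg v]; decide)), ?_, ?_⟩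
  · simp [hxu]
  · simp [hxw, add_assoc, CharTwo.add_self_eq_zero]

end Cubic

section LexProduct

variable {V : Type*} {Λ : SimpleGraph V} {B : Subgroup (Perm V)}

theorem isGraphAut_lexK2_of_mem_twistGroup (hBaut : ∀ b ∈ B, IsGraphAut Λ b)
    {E : Submodule (ZMod 2) (V → ZMod 2)} {hE : ∀ σ ∈ B, ∀ x ∈ E, (fun a => x (σ a)) ∈ E}
    {g : Perm (V × ZMod 2)} (hg : g ∈ twistGroup B E hE) : IsGraphAut (lexK2 Λ) g := by
  obtain ⟨b, hb, x, -, rfl⟩ := hg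
  exact fun p q => hBaut b hb p.1 q.1

variable [Fintype V]

noncomputable abbrev twistGroupEigOne (Λ : SimpleGraph V) (B : Subgroup (Perm V))
    (hBaut : ∀ b ∈ B, IsGraphAut Λ b) : Subgroup (Perm (V × ZMod 2)) :=
  twistGroup B (eigOne Λ) fun b hb _ hx => comp_mem_eigOne (hBaut b hb) hx

theorem arcTransitiveOn_twistGroupEigOne (hconn : Λ.Connected)
    (hd : 2 ≤ Module.finrank (ZMod 2) (eigOne Λ)) (hreg : ∀ v, Nat.card (Λ.neighborSet v) = 3)
    (hBaut : ∀ b ∈ B, IsGraphAut Λ b) (hBt : SharplyTwoArcTransitiveOn Λ B) :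
    ArcTransitiveOn (lexK2 Λ) (twistGroupEigOne Λ B hBaut) := by
  rintro ⟨u, i⟩ ⟨w, j⟩ ⟨u', i'⟩ ⟨w', j'⟩ (huw : Λ.Adj u w) (huw' : Λ.Adj u' w')
  obtain ⟨b, hb, hbu, hbw⟩ :=
    hBt.exists_apply_eq_apply_eq (fun v => by rw [hreg v]; norm_num) huw huw'
  obtain ⟨x, hx, hxu, hxw⟩ :=
    exists_mem_eigOne_apply_eq_apply_eq hconn hd hreg hBaut hBt huw (i + i') (j + j')
  refine ⟨twist b x, ⟨b, hb, x, hx, rfl⟩, ?_, ?_⟩ <;>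
    simp [hbu, hbw, hxu, hxw, ← add_assoc, CharTwo.add_self_eq_zero]

theorem card_twistGroupEigOne_inf_stabilizer (hreg : ∀ v, Nat.card (Λ.neighborSet v) = 3)
    (hBaut : ∀ b ∈ B, IsGraphAut Λ b) (hBt : SharplyTwoArcTransitiveOn Λ B) (p : V × ZMod 2) :
    Nat.card ↥(twistGroupEigOne Λ B hBaut ⊓ MulAction.stabilizer (Perm (V × ZMod 2)) p) =
      3 * 2 ^ Module.finrank (ZMod 2) (eigOne Λ) := by
  rw [card_twistGroup_inf_stabilizer, hBt.card_inf_stabilizer hBaut hreg,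
    ← two_mul_card_ker_proj_comp_subtype _ (one_mem_eigOne fun v => by rw [hreg v]; decide) p.1]
  ring

open scoped Classical in
theorem permIsomorphic_localActionSet_twistGroupEigOne (hconn : Λ.Connected)
    (hd : 2 ≤ Module.finrank (ZMod 2) (eigOne Λ)) (hreg : ∀ v, Nat.card (Λ.neighborSet v) = 3)
    (hBaut : ∀ b ∈ B, IsGraphAut Λ b) (hBt : SharplyTwoArcTransitiveOn Λ B) (v : V)
    (i : ZMod 2) :
    PermIsomorphic (localActionSet (lexK2 Λ) (twistGroupEigOne Λ B hBaut) (v, i))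
      (twistModel (Λ.neighborSet v)) := by
  let F : (lexK2 Λ).neighborSet (v, i) ≃ Λ.neighborSet v × ZMod 2 :=
    prodSubtypeFstEquivSubtypeProd
  refine permIsomorphic_iff.mpr ⟨F, Set.ext fun q => ⟨?_, ?_⟩⟩
  · rintro ⟨τ, y, hy, rfl⟩
    obtain ⟨⟨b, hbB, hbv⟩, hbτ⟩ := (hBt.bijective_subtypePerm hBaut hreg v).2 τ
    obtain ⟨x, hx, hxv, hxy⟩ := exists_mem_eigOne_restrict_eq hconn hd hreg hBaut hBt v y hy
    have hxy' : y = fun n : Λ.neighborSet v => x n := funext fun n => (hxy n).symm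
    subst hbτ hxy'
    refine ⟨F.symm.permCongr (twist _ _), ⟨twist b x, ⟨b, hbB, x, hx, rfl⟩,
      twist_apply_eq_self_iff.mpr ⟨hbv, hxv⟩, ?_⟩, F.permCongr.apply_symm_apply _⟩
    exact (permCongr_prodSubtypeFst_eq_twist_iff _ _ x).mp (F.permCongr.apply_symm_apply _)
  · rintro ⟨p, ⟨_, ⟨b, hbB, x, hx, rfl⟩, hfix, hp⟩, rfl⟩
    obtain ⟨hbv, hxv⟩ := twist_apply_eq_self_iff.mp hfix
    refine ⟨b.subtypePerm ((hBaut b hbB).mem_neighborSet_iff hbv), fun n => x n, ?_,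
      (permCongr_prodSubtypeFst_eq_twist_iff p _ x).mpr hp⟩
    rw [mem_eigOne_iff.mp hx v, hxv]

end LexProduct

/-- If `Λ` is a finite connected cubic graph with a sharply 2-arc-transitive group of
automorphisms `B` and `d := dim E₁(Λ) ≥ 2`, then `Λ[K̄₂]` has an arc-transitive group of
automorphisms `G` with vertex-stabilisers of order `3·2^d` and local action `S₄(6d)`. -/
theorem statement12 {V : Type*} [Fintype V] (Λ : SimpleGraph V) (hconn : Λ.Connected)
    (hreg : ∀ v : V, Nat.card (Λ.neighborSet v) = 3)
    (B : Subgroup (Equiv.Perm V)) (hBaut : ∀ g ∈ B, IsGraphAut Λ g)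
    (hBt : SharplyTwoArcTransitiveOn Λ B)
    (hd : 2 ≤ Module.finrank (ZMod 2) (eigOne Λ)) :
    ∃ G : Subgroup (Equiv.Perm (V × ZMod 2)),
      (∀ g ∈ G, IsGraphAut (lexK2 Λ) g) ∧ ArcTransitiveOn (lexK2 Λ) G ∧
      (∀ v : V × ZMod 2,
        Nat.card ↥(G ⊓ MulAction.stabilizer (Equiv.Perm (V × ZMod 2)) v) =
          3 * 2 ^ Module.finrank (ZMod 2) (eigOne Λ)) ∧
      (∀ v : V × ZMod 2, PermIsomorphic (localActionSet (lexK2 Λ) G v)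
        ((S46d : Subgroup _) : Set (Equiv.Perm (Equiv.Perm (Fin 4) ⧸ Hd)))) := by
  classical
  refine ⟨twistGroupEigOne Λ B hBaut, fun _ => isGraphAut_lexK2_of_mem_twistGroup hBaut,
    arcTransitiveOn_twistGroupEigOne hconn hd hreg hBaut hBt,
    card_twistGroupEigOne_inf_stabilizer hreg hBaut hBt, fun ⟨v, i⟩ => ?_⟩
  have h3 : Fintype.card (Λ.neighborSet v) = 3 := by rw [← Nat.card_eq_fintype_card, hreg v]
  exact (permIsomorphic_localActionSet_twistGroupEigOne hconn hd hreg hBaut hBt v i).trans <|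
    (permIsomorphic_twistModel (Fintype.equivFinOfCardEq h3)).trans
      permIsomorphic_twistModel_S46d
end
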